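/- Let G be embedded in G⁰(2) as above with G⁰ acting freely on a set C. Suppose K is a subgroup of G⁰ normal in G containing all elements of G⁰ fixing a point of C (vacuously, K normal in G suffices since the action is free), the commutator subgroup, and all g·Ad_{τ'}(g). Then every element of G⁰(2) fixing some point of C × C lies in G_K. In particular, if (g,h) ∈ G⁰ × G⁰ fixes a point of C × C then g = h = 1, and if τ'(g,h) fixes a point then τ'(g,h) ∈ K × K · {1, σ-part} ⊆ G_K. -/

import Mathlib

open Subgroup

/-- The swap automorphism of `G × G`. -/
def swapAut (G : Type*) [Group G] : MulAut (G × G) :=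
  (MulEquiv.prodComm : G × G ≃* G × G)

/-- The order-two subgroup of `MulAut (G × G)` generated by the swap. -/
abbrev swapZ2 (G : Type*) [Group G] : Subgroup (MulAut (G × G)) :=
  Subgroup.zpowers (swapAut G)

/-- The group `G(2) = (G × G) ⋊ ℤ/2ℤ` (with the swap action). -/
abbrev Gtwo (G : Type*) [Group G] :=
  SemidirectProduct (G × G) (swapZ2 G) (swapZ2 G).subtype

/-- The element `σ` of `G(2)`. -/
def sigmaW (G : Type*) [Group G] : Gtwo G :=
  ⟨1, ⟨swapAut G, Subgroup.mem_zpowers _⟩⟩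

open Classical in
/-- The embedding of `G` into `G(2)` determined by `G0` and `τ'`:
`g ↦ ((g, τ'gτ'⁻¹), 1)` for `g ∈ G0`, and `τ' ↦ σ·((τ'², 1), 1)`. -/
noncomputable def iota {G : Type*} [Group G] (G0 : Subgroup G) (τ' : G) (g : G) : Gtwo G :=
  if g ∈ G0 then ⟨(g, τ' * g * τ'⁻¹), 1⟩
  else ⟨(g * τ', τ' * g * τ'⁻¹ * τ'⁻¹), ⟨swapAut G, Subgroup.mem_zpowers _⟩⟩

lemma swapAut_sq (G : Type*) [Group G] : swapAut G ^ 2 = 1 := by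
  rw [sq]; ext x <;> rfl

lemma swapZ2_cases {G : Type*} [Group G] (s : swapZ2 G) :
    (s : MulAut (G × G)) = 1 ∨ (s : MulAut (G × G)) = swapAut G := by
  obtain ⟨u, hu⟩ := s
  obtain ⟨k, rfl⟩ := Subgroup.mem_zpowers_iff.mp hu
  have h2 : swapAut G ^ (2 : ℤ) = 1 := by
    rw [show (2 : ℤ) = ((2 : ℕ) : ℤ) from rfl, zpow_natCast, swapAut_sq]
  rcases Int.even_or_odd k with ⟨m, rfl⟩ | ⟨m, rfl⟩
  · left
    show swapAut G ^ (m + m) = 1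
    rw [← two_mul, zpow_mul, h2, one_zpow]
  · right
    show swapAut G ^ (2 * m + 1) = swapAut G
    rw [zpow_add, zpow_mul, h2, one_zpow, one_mul, zpow_one]

/-- The subgroup `(G⁰ × G⁰) ⋊ ℤ/2ℤ` of `G(2)`. -/
def G0two {G : Type*} [Group G] (G0 : Subgroup G) : Subgroup (Gtwo G) where
  carrier := {x | x.left.1 ∈ G0 ∧ x.left.2 ∈ G0}
  one_mem' := ⟨G0.one_mem, G0.one_mem⟩
  mul_mem' := by
    rintro x y ⟨hx1, hx2⟩ ⟨hy1, hy2⟩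
    have h : (x * y).left = x.left * (x.right : MulAut (G × G)) y.left := rfl
    rcases swapZ2_cases x.right with hs | hs <;>
      · show ((x*y).left).1 ∈ G0 ∧ ((x*y).left).2 ∈ G0
        rw [h, hs]
        first
        | exact ⟨G0.mul_mem hx1 hy1, G0.mul_mem hx2 hy2⟩
        | exact ⟨G0.mul_mem hx1 hy2, G0.mul_mem hx2 hy1⟩
  inv_mem' := by
    rintro x ⟨hx1, hx2⟩
    have h : (x⁻¹).left = ((x.right⁻¹ : swapZ2 G) : MulAut (G × G)) x.left⁻¹ := rfl
    rcases swapZ2_cases x.right⁻¹ with hs | hs <;>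
      · show ((x⁻¹).left).1 ∈ G0 ∧ ((x⁻¹).left).2 ∈ G0
        rw [h, hs]
        first
        | exact ⟨G0.inv_mem hx1, G0.inv_mem hx2⟩
        | exact ⟨G0.inv_mem hx2, G0.inv_mem hx1⟩

/-- The set `G⁰_K = {(g,h) ∈ G⁰ × G⁰ : h·(τ'gτ'⁻¹)⁻¹ ∈ K}`, seen inside `G(2)`. -/
def G0Kset {G : Type*} [Group G] (G0 : Subgroup G) (τ' : G) (K : Subgroup G) :
    Set (Gtwo G) :=
  {x | x.right = 1 ∧ x.left.1 ∈ G0 ∧ x.left.2 ∈ G0 ∧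
    x.left.2 * (τ' * x.left.1 * τ'⁻¹)⁻¹ ∈ K}

/-- The set `G_K = G⁰_K ∪ τ'·G⁰_K` inside `G(2)`. -/
noncomputable def GKset {G : Type*} [Group G] (G0 : Subgroup G) (τ' : G) (K : Subgroup G) :
    Set (Gtwo G) :=
  G0Kset G0 τ' K ∪ (fun x => iota G0 τ' τ' * x) '' G0Kset G0 τ' K

/-!
In `G⁰(2)` an element either has trivial `ℤ/2ℤ`-part, `(a, b)`, or is `(a, b)σ`. Freeness of
`G⁰` on `C` forces a fixed `(a, b)` to be `1`, and a fixed `(a, b)σ` swaps the coordinates of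
its fixed point `(x, y)`, so `ab` fixes `x` and `a = b⁻¹`. Writing `(b⁻¹, b)σ = τ'·(b, τ⁻¹b⁻¹)`,
membership in `G_K` reduces to `τ⁻¹ · b⁻¹Ad_{τ'}(b⁻¹) ∈ K`.
-/

lemma inv_sq_mul_mem_of_mul_conj_mem {G : Type*} [Group G] {K : Subgroup G} {τ' b : G}
    (hτ2 : τ' ^ 2 ∈ K) (hb : b⁻¹ * (τ' * b⁻¹ * τ'⁻¹) ∈ K) :
    τ'⁻¹ * τ'⁻¹ * b⁻¹ * (τ' * b * τ'⁻¹)⁻¹ ∈ K := by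
  have h : τ'⁻¹ * τ'⁻¹ * b⁻¹ * (τ' * b * τ'⁻¹)⁻¹ = (τ' ^ 2)⁻¹ * (b⁻¹ * (τ' * b⁻¹ * τ'⁻¹)) := by
    group
  exact h ▸ K.mul_mem (K.inv_mem hτ2) hb

section Gtwo

variable {G : Type*} [Group G]

def swapGen (G : Type*) [Group G] : swapZ2 G :=
  ⟨swapAut G, Subgroup.mem_zpowers _⟩

@[simp]
lemma swapAut_apply (p : G × G) : swapAut G p = (p.2, p.1) := rfl

lemma Gtwo.eq_mk_one_or_eq_mk_swapGen (w : Gtwo G) :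
    w = ⟨w.left, 1⟩ ∨ w = ⟨w.left, swapGen G⟩ :=
  (swapZ2_cases w.right).imp (fun h => SemidirectProduct.ext rfl (Subtype.ext h))
    (fun h => SemidirectProduct.ext rfl (Subtype.ext h))

lemma mk_swapGen_eq_mk_one_mul_sigmaW (p : G × G) :
    (⟨p, swapGen G⟩ : Gtwo G) = ⟨p, 1⟩ * sigmaW G :=
  SemidirectProduct.ext (by simp [sigmaW]) (one_mul _).symm

variable {G0 : Subgroup G} {τ' : G}

lemma iota_self_mul_mk_one (hτ : τ' ∉ G0) (a b : G) :
    iota G0 τ' τ' * ⟨(a, b), 1⟩ = ⟨(τ' * τ' * b, a), swapGen G⟩ := by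
  rw [iota, if_neg hτ]
  refine SemidirectProduct.ext ?_ (mul_one (swapGen G))
  ext <;> simp [SemidirectProduct.mul_left]

lemma one_mem_G0Kset (K : Subgroup G) : (1 : Gtwo G) ∈ G0Kset G0 τ' K :=
  ⟨rfl, G0.one_mem, G0.one_mem, by simp⟩

lemma mk_swapGen_mem_GKset {K : Subgroup G} (hτ : τ' ∉ G0) (hτ2 : τ' ^ 2 ∈ G0) {a b : G}
    (ha : a ∈ G0) (hb : b ∈ G0) (hK : τ'⁻¹ * τ'⁻¹ * a * (τ' * b * τ'⁻¹)⁻¹ ∈ K) :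
    (⟨(a, b), swapGen G⟩ : Gtwo G) ∈ GKset G0 τ' K := by
  have hτinv : τ'⁻¹ * τ'⁻¹ ∈ G0 := by
    simpa [sq, mul_inv_rev] using G0.inv_mem hτ2
  refine Or.inr ⟨⟨(b, τ'⁻¹ * τ'⁻¹ * a), 1⟩, ⟨rfl, hb, G0.mul_mem hτinv ha, hK⟩, ?_⟩
  show iota G0 τ' τ' * _ = _
  rw [iota_self_mul_mk_one hτ]
  congr 2
  group

end Gtwo

section Action

variable {G : Type*} [Group G] {C : Type*} [MulAction G C] [MulAction (Gtwo G) (C × C)]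
  (hact : ∀ (a b : G) (x y : C),
    (⟨(a, b), 1⟩ : Gtwo G) • ((x, y) : C × C) = (a • x, b • y))

include hact in
lemma smul_eq_of_mk_one_smul_eq {a b : G} {x y : C}
    (h : (⟨(a, b), 1⟩ : Gtwo G) • ((x, y) : C × C) = (x, y)) : a • x = x ∧ b • y = y :=
  Prod.ext_iff.mp ((hact a b x y).symm.trans h)

include hact in
lemma mul_smul_eq_of_mk_swapGen_smul_eq (hσ : ∀ x y : C, sigmaW G • ((x, y) : C × C) = (y, x))
    {a b : G} {x y : C} (h : (⟨(a, b), swapGen G⟩ : Gtwo G) • ((x, y) : C × C) = (x, y)) :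
    (a * b) • x = x := by
  rw [mk_swapGen_eq_mk_one_mul_sigmaW, mul_smul, hσ, hact, Prod.ext_iff] at h
  rw [mul_smul, show b • x = y from h.2, show a • y = x from h.1]

variable (hσ : ∀ x y : C, sigmaW G • ((x, y) : C × C) = (y, x))
  {G0 : Subgroup G} (hfree : ∀ g ∈ G0, ∀ x : C, g • x = x → g = 1)

include hact hσ hfree in
lemma mem_GKset_of_smul_eq {τ' : G} (hτ : τ' ∉ G0) {K : Subgroup G} (hKle : K ≤ G0)
    (hinv : ∀ g ∈ G0, g * (τ' * g * τ'⁻¹) ∈ K) (hτ2 : τ' ^ 2 ∈ K) {w : Gtwo G}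
    (h1 : w.left.1 ∈ G0) (h2 : w.left.2 ∈ G0) {pt : C × C} (hpt : w • pt = pt) :
    w ∈ GKset G0 τ' K := by
  obtain ⟨⟨a, b⟩, r⟩ := w
  obtain ⟨x, y⟩ := pt
  dsimp only at h1 h2
  rcases Gtwo.eq_mk_one_or_eq_mk_swapGen ⟨(a, b), r⟩ with hw | hw <;> rw [hw] at hpt ⊢
  · obtain ⟨hax, hby⟩ := smul_eq_of_mk_one_smul_eq hact hpt
    obtain rfl := hfree a h1 x hax
    obtain rfl := hfree b h2 y hby
    exact Or.inl (one_mem_G0Kset K)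
  · have hab : a * b = 1 :=
      hfree _ (G0.mul_mem h1 h2) x (mul_smul_eq_of_mk_swapGen_smul_eq hact hσ hpt)
    obtain rfl := eq_inv_of_mul_eq_one_left hab
    exact mk_swapGen_mem_GKset hτ (hKle hτ2) h1 h2
      (inv_sq_mul_mem_of_mul_conj_mem hτ2 (hinv _ h1))

end Action

theorem statement13_general {G : Type*} [Group G] {C : Type*} [MulAction G C]
    (G0 : Subgroup G) (τ' : G) (hτ : τ' ∉ G0)
    (hfree : ∀ g ∈ G0, ∀ x : C, g • x = x → g = 1)
    [MulAction (Gtwo G) (C × C)]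
    (hact : ∀ (a b : G) (x y : C),
      (⟨(a, b), 1⟩ : Gtwo G) • ((x, y) : C × C) = (a • x, b • y))
    (hσ : ∀ x y : C, sigmaW G • ((x, y) : C × C) = (y, x))
    (K : Subgroup G) (hKle : K ≤ G0)
    (hinv : ∀ g ∈ G0, g * (τ' * g * τ'⁻¹) ∈ K)
    (hτ2 : τ' ^ 2 ∈ K) :
    (∀ w : Gtwo G, w.left.1 ∈ G0 → w.left.2 ∈ G0 →
      (∃ pt : C × C, w • pt = pt) → w ∈ GKset G0 τ' K) ∧
    (∀ a b : G, a ∈ G0 → b ∈ G0 →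
      (∃ pt : C × C, (⟨(a, b), 1⟩ : Gtwo G) • pt = pt) → a = 1 ∧ b = 1) ∧
    (∀ a b : G, a ∈ G0 → b ∈ G0 →
      (∃ pt : C × C, (iota G0 τ' τ' * (⟨(a, b), 1⟩ : Gtwo G)) • pt = pt) →
      iota G0 τ' τ' * (⟨(a, b), 1⟩ : Gtwo G) ∈ GKset G0 τ' K) := by
  have fixed_mem : ∀ w : Gtwo G, w.left.1 ∈ G0 → w.left.2 ∈ G0 →
      (∃ pt : C × C, w • pt = pt) → w ∈ GKset G0 τ' K :=
    fun w h1 h2 ⟨_, hpt⟩ => mem_GKset_of_smul_eq hact hσ hfree hτ hKle hinv hτ2 h1 h2 hpt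
  refine ⟨fixed_mem, ?_, ?_⟩
  · rintro a b ha hb ⟨⟨x, y⟩, hpt⟩
    obtain ⟨hax, hby⟩ := smul_eq_of_mk_one_smul_eq hact hpt
    exact ⟨hfree a ha x hax, hfree b hb y hby⟩
  · intro a b ha hb hpt
    rw [iota_self_mul_mk_one hτ] at hpt ⊢
    exact fixed_mem _ (G0.mul_mem (hKle (sq τ' ▸ hτ2)) hb) ha hpt

/-- with `G⁰` acting freely on `C`, and `K ≤ G⁰` normal in `G` containing
the elements of `G⁰` with fixed points, the commutators, `τ = (τ')²` and all `g·Ad_{τ'}(g)`,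
every element of `G⁰(2)` fixing a point of `C × C` lies in `G_K`; in particular any
`(g,h) ∈ G⁰ × G⁰` with a fixed point is trivial, and any `τ'(g,h)` with a fixed point
lies in `G_K`. -/
theorem statement13 {G : Type*} [Group G] [Finite G] {C : Type*} [MulAction G C]
    (G0 : Subgroup G) (hind : G0.index = 2) (τ' : G) (hτ : τ' ∉ G0)
    (hfree : ∀ g ∈ G0, ∀ x : C, g • x = x → g = 1)
    [MulAction (Gtwo G) (C × C)]
    (hact : ∀ (a b : G) (x y : C),
      (⟨(a, b), 1⟩ : Gtwo G) • ((x, y) : C × C) = (a • x, b • y))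
    (hσ : ∀ x y : C, sigmaW G • ((x, y) : C × C) = (y, x))
    (K : Subgroup G) (hKle : K ≤ G0) (hKn : K.Normal)
    (hSig : ∀ g ∈ G0, (∃ x : C, g • x = x) → g ∈ K)
    (hcomm : ∀ a ∈ G0, ∀ b ∈ G0, a * b * a⁻¹ * b⁻¹ ∈ K)
    (hinv : ∀ g ∈ G0, g * (τ' * g * τ'⁻¹) ∈ K)
    (hτ2 : τ' ^ 2 ∈ K) :
    (∀ w : Gtwo G, w.left.1 ∈ G0 → w.left.2 ∈ G0 →
      (∃ pt : C × C, w • pt = pt) → w ∈ GKset G0 τ' K) ∧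
    (∀ a b : G, a ∈ G0 → b ∈ G0 →
      (∃ pt : C × C, (⟨(a, b), 1⟩ : Gtwo G) • pt = pt) → a = 1 ∧ b = 1) ∧
    (∀ a b : G, a ∈ G0 → b ∈ G0 →
      (∃ pt : C × C, (iota G0 τ' τ' * (⟨(a, b), 1⟩ : Gtwo G)) • pt = pt) →
      iota G0 τ' τ' * (⟨(a, b), 1⟩ : Gtwo G) ∈ GKset G0 τ' K) :=
  statement13_general G0 τ' hτ hfree hact hσ K hKle hinv hτ2
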